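/- arXiv:0705.3774 — 2 statements merged into one kernel-verified Lean document; each statement's English description precedes it below -/
import Mathlib

section
/- Let n ≥ 3 be an integer, m = n − 1, and 0 < r₀ < r₁. Let f be a smooth function on 𝕋^m × [r₀, r₁) and let u be a smooth positive function on 𝕋^m × [r₀, r₁) satisfying (n−1) r ∂u/∂r = u²Δu + ((n−1)(n−2)/2) u + f u³. Define ũ(p, t) = r^{1 − n/2} u(p, r) and f̃(p, t) = f(p, r), where t = r^{n−2}/((n−1)(n−2)). Then ũ is a smooth positive function satisfying ∂ũ/∂t = ũ²Δũ + f̃ ũ³ on 𝕋^m × [t₀, t₁), where t_i = r_i^{n−2}/((n−1)(n−2)). -/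
open MeasureTheory Filter Set

/-- Partial derivative in the `i`-th coordinate direction of a function on `ℝ^m`. -/
noncomputable def pd {m : ℕ} (i : Fin m) (φ : (Fin m → ℝ) → ℝ) : (Fin m → ℝ) → ℝ :=
  fun p => deriv (fun x : ℝ => φ (Function.update p i x)) (p i)

/-- The flat Laplacian: sum of second partial derivatives in the standard coordinates. -/
noncomputable def flatLap {m : ℕ} (φ : (Fin m → ℝ) → ℝ) : (Fin m → ℝ) → ℝ :=
  fun p => ∑ i, pd i (pd i φ) p

/-- The squared norm of the gradient in the standard flat coordinates. -/
noncomputable def gradSq {m : ℕ} (φ : (Fin m → ℝ) → ℝ) : (Fin m → ℝ) → ℝ :=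
  fun p => ∑ i, (pd i φ p) ^ 2

/-- `φ : ℝ^m → ℝ` is ℤ^m-periodic, i.e. descends to the flat torus `𝕋^m = (ℝ/ℤ)^m`. -/
def ZPer {m : ℕ} (φ : (Fin m → ℝ) → ℝ) : Prop :=
  ∀ (p : Fin m → ℝ) (z : Fin m → ℤ), φ (fun i => p i + (z i : ℝ)) = φ p

/-- A fundamental domain for the torus `(ℝ/ℤ)^m`; its Lebesgue volume is 1, so integrals
over it realize the normalized Haar integral over `𝕋^m`. -/
def cube (m : ℕ) : Set (Fin m → ℝ) := Set.univ.pi fun _ => Set.Ico (0 : ℝ) 1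

/-- Iterated partial derivative along a list of coordinate directions. -/
noncomputable def pdList {m : ℕ} (l : List (Fin m)) (φ : (Fin m → ℝ) → ℝ) : (Fin m → ℝ) → ℝ :=
  List.foldr pd φ l

/-- The Euclidean ball of radius `r` about `p`; for `r < 1/2` this is isometric to the
metric ball of radius `r` in the flat torus `𝕋^m`. -/
def eBall {m : ℕ} (p : Fin m → ℝ) (r : ℝ) : Set (Fin m → ℝ) := {q | ∑ i, (q i - p i) ^ 2 < r ^ 2}

/-
Parabolic rescaling: with r = ρ(t) = ((n-1)(n-2) t)^{1/(n-2)} one has dr/dt = (n-1) r^{3-n}, so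
for ũ = r^α u(r), α = 1 - n/2, the chain rule gives ∂ũ/∂t = r^{3-n+α-1} (α(n-1) u + (n-1) r ∂u/∂r).
Since 3 - n + α - 1 = 3α and α(n-1) = -(n-1)(n-2)/2, the equation for u turns this into
r^{3α} (u²Δu + f u³) = ũ²Δũ + f̃ ũ³: the linear term (n-1)(n-2)/2 · u is exactly absorbed.
-/

lemma pd_const_mul {m : ℕ} (i : Fin m) (a : ℝ) (φ : (Fin m → ℝ) → ℝ) :
    pd i (fun q => a * φ q) = fun p => a * pd i φ p := by
  funext p
  exact deriv_const_mul_field a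

lemma flatLap_const_mul {m : ℕ} (a : ℝ) (φ : (Fin m → ℝ) → ℝ) (p : Fin m → ℝ) :
    flatLap (fun q => a * φ q) p = a * flatLap φ p := by
  simp only [flatLap, pd_const_mul, Finset.mul_sum]

section TimeChange

variable {a : ℝ}

lemma mapsTo_rpow_inv_mul_Ico {k : ℕ} (hk : k ≠ 0) (ha : 0 < a) {r₀ r₁ : ℝ} (hr₀ : 0 ≤ r₀)
    (hr₁ : 0 ≤ r₁) :
    MapsTo (fun t => (a * t) ^ (1 / (k : ℝ))) (Ico (r₀ ^ k / a) (r₁ ^ k / a)) (Ico r₀ r₁) := by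
  rintro t ⟨ht₀, ht₁⟩
  rw [div_le_iff₀' ha] at ht₀
  rw [lt_div_iff₀' ha] at ht₁
  have hroot : ∀ r : ℝ, 0 ≤ r → (r ^ k) ^ (1 / (k : ℝ)) = r := fun r hr => by
    rw [one_div, Real.pow_rpow_inv_natCast hr hk]
  have hk' : (0 : ℝ) < 1 / k := one_div_pos.2 (Nat.cast_pos.2 (Nat.pos_of_ne_zero hk))
  constructor
  · calc r₀ = (r₀ ^ k) ^ (1 / (k : ℝ)) := (hroot r₀ hr₀).symm
      _ ≤ (a * t) ^ (1 / (k : ℝ)) := Real.rpow_le_rpow (by positivity) ht₀ hk'.le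
  · calc (a * t) ^ (1 / (k : ℝ)) < (r₁ ^ k) ^ (1 / (k : ℝ)) :=
          Real.rpow_lt_rpow ((pow_nonneg hr₀ k).trans ht₀) ht₁ hk'
      _ = r₁ := hroot r₁ hr₁

lemma hasDerivAt_mul_rpow_inv {b κ t : ℝ} (hκ : κ ≠ 0) (ht : 0 < b * κ * t) :
    HasDerivAt (fun t => (b * κ * t) ^ (1 / κ)) (b * ((b * κ * t) ^ (1 / κ)) ^ (1 - κ)) t := by
  have h := (Real.hasDerivAt_rpow_const (p := 1 / κ) (Or.inl ht.ne')).comp t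
    ((hasDerivAt_id t).const_mul (b * κ))
  refine h.congr_deriv ?_
  rw [← Real.rpow_mul ht.le, show 1 / κ * (1 - κ) = 1 / κ - 1 by field_simp]
  field_simp

end TimeChange

section Rescale

variable {E : Type*}

noncomputable def rescale (α : ℝ) (ρ : ℝ → ℝ) (u : E → ℝ → ℝ) (p : E) (t : ℝ) : ℝ :=
  ρ t ^ α * u p (ρ t)

variable {α : ℝ} {ρ : ℝ → ℝ} {u : E → ℝ → ℝ} {s T : Set ℝ}

lemma contDiffOn_rescale [NormedAddCommGroup E] [NormedSpace ℝ E] {k : WithTop ℕ∞}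
    (hu : ContDiffOn ℝ k (fun q : E × ℝ => u q.1 q.2) (univ ×ˢ s))
    (hρ : ContDiffOn ℝ k ρ T) (hmaps : MapsTo ρ T s) (hρpos : ∀ t ∈ T, 0 < ρ t) :
    ContDiffOn ℝ k (fun q : E × ℝ => rescale α ρ u q.1 q.2) (univ ×ˢ T) := by
  have hρsnd : ContDiffOn ℝ k (fun q : E × ℝ => ρ q.2) (univ ×ˢ T) :=
    hρ.comp contDiff_snd.contDiffOn fun q hq => hq.2
  have hpow : ContDiffOn ℝ k (fun q : E × ℝ => ρ q.2 ^ α) (univ ×ˢ T) := fun q hq =>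
    (Real.contDiffAt_rpow_const_of_ne (hρpos q.2 hq.2).ne').comp_contDiffWithinAt
      (g := fun x => x ^ α) q (hρsnd q hq)
  have hcomp : ContDiffOn ℝ k (fun q : E × ℝ => u q.1 (ρ q.2)) (univ ×ˢ T) :=
    hu.comp (contDiff_fst.contDiffOn.prodMk hρsnd) fun q hq => ⟨mem_univ _, hmaps hq.2⟩
  exact hpow.mul hcomp

lemma hasDerivWithinAt_rescale {p : E} {t ρ' u' : ℝ} (hρ : HasDerivAt ρ ρ' t)
    (hu : HasDerivWithinAt (u p) u' s (ρ t)) (hmaps : MapsTo ρ T s) (hρt : ρ t ≠ 0) :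
    HasDerivWithinAt (rescale α ρ u p)
      (ρ' * (α * ρ t ^ (α - 1) * u p (ρ t) + ρ t ^ α * u')) T t := by
  have hpow := ((Real.hasDerivAt_rpow_const (p := α) (Or.inl hρt)).comp t hρ).hasDerivWithinAt
    (s := T)
  refine (hpow.mul (hu.comp t hρ.hasDerivWithinAt hmaps)).congr_deriv ?_
  simp only [Function.comp_apply]
  ring

lemma flatLap_rescale {m : ℕ} {u : (Fin m → ℝ) → ℝ → ℝ} (p : Fin m → ℝ) (t : ℝ) :
    flatLap (fun q => rescale α ρ u q t) p = ρ t ^ α * flatLap (fun q => u q (ρ t)) p :=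
  flatLap_const_mul _ _ _

end Rescale

lemma rescaled_equation {N r u du L F : ℝ} (hr : 0 < r)
    (h : (N - 1) * r * du = u ^ 2 * L + (N - 1) * (N - 2) / 2 * u + F * u ^ 3) :
    (N - 1) * r ^ (3 - N) * ((1 - N / 2) * r ^ (1 - N / 2 - 1) * u + r ^ (1 - N / 2) * du) =
      (r ^ (1 - N / 2) * u) ^ 2 * (r ^ (1 - N / 2) * L) + F * (r ^ (1 - N / 2) * u) ^ 3 := by
  set S := r ^ (-(N / 2))
  have hα : r ^ (1 - N / 2) = r * S := by
    rw [show 1 - N / 2 = 1 + -(N / 2) by ring, Real.rpow_add hr, Real.rpow_one]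
  have hα₁ : r ^ (1 - N / 2 - 1) = S := by
    rw [show 1 - N / 2 - 1 = -(N / 2) by ring]
  have h3 : r ^ (3 - N) = r ^ 3 * S ^ 2 := by
    rw [show 3 - N = (3 : ℕ) + (-(N / 2) + -(N / 2)) by push_cast; ring, Real.rpow_add hr,
      Real.rpow_add hr, Real.rpow_natCast]
    ring
  rw [hα, hα₁, h3]
  linear_combination (r * S) ^ 3 * h

theorem stmt_3_general (n : ℕ) (hn : 3 ≤ n) (r₀ r₁ : ℝ) (hr₀ : 0 < r₀) (hr₀₁ : r₀ < r₁)
    (f u : (Fin (n - 1) → ℝ) → ℝ → ℝ)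
    (husmooth : ContDiffOn ℝ (⊤ : ℕ∞) (fun q : (Fin (n - 1) → ℝ) × ℝ => u q.1 q.2)
      (Set.univ ×ˢ Set.Ico r₀ r₁))
    (huper : ∀ r ∈ Set.Ico r₀ r₁, ZPer (fun p => u p r))
    (hupos : ∀ p, ∀ r ∈ Set.Ico r₀ r₁, 0 < u p r)
    (hpde : ∀ p, ∀ r ∈ Set.Ico r₀ r₁,
      ((n : ℝ) - 1) * r * derivWithin (fun s => u p s) (Set.Ico r₀ r₁) r =
        (u p r) ^ 2 * flatLap (fun q => u q r) p
          + ((n : ℝ) - 1) * ((n : ℝ) - 2) / 2 * u p r + f p r * (u p r) ^ 3)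
    (rOf : ℝ → ℝ)
    (hrOf : ∀ t : ℝ, rOf t = (((n : ℝ) - 1) * ((n : ℝ) - 2) * t) ^ ((1 : ℝ) / ((n : ℝ) - 2)))
    (t₀ t₁ : ℝ)
    (ht₀ : t₀ = r₀ ^ (n - 2) / (((n : ℝ) - 1) * ((n : ℝ) - 2)))
    (ht₁ : t₁ = r₁ ^ (n - 2) / (((n : ℝ) - 1) * ((n : ℝ) - 2)))
    (ut ft : (Fin (n - 1) → ℝ) → ℝ → ℝ)
    (hut : ∀ p t, ut p t = (rOf t) ^ ((1 : ℝ) - (n : ℝ) / 2) * u p (rOf t))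
    (hft : ∀ p t, ft p t = f p (rOf t)) :
    ContDiffOn ℝ (⊤ : ℕ∞) (fun q : (Fin (n - 1) → ℝ) × ℝ => ut q.1 q.2)
      (Set.univ ×ˢ Set.Ico t₀ t₁) ∧
    (∀ t ∈ Set.Ico t₀ t₁, ZPer (fun p => ut p t)) ∧
    (∀ p, ∀ t ∈ Set.Ico t₀ t₁, 0 < ut p t) ∧
    (∀ p, ∀ t ∈ Set.Ico t₀ t₁,
      derivWithin (fun s => ut p s) (Set.Ico t₀ t₁) t =
        (ut p t) ^ 2 * flatLap (fun q => ut q t) p + ft p t * (ut p t) ^ 3) := by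
  obtain rfl : ut = rescale (1 - n / 2) rOf u := funext₂ hut
  obtain rfl : ft = fun p t => f p (rOf t) := funext₂ hft
  have hN : (2 : ℝ) < n := by exact_mod_cast (by omega : 2 < n)
  set a : ℝ := (n - 1) * (n - 2)
  have ha : 0 < a := mul_pos (by linarith) (by linarith)
  have hρ : rOf = fun t => (a * t) ^ (1 / ((n : ℝ) - 2)) := funext hrOf
  have hmaps : MapsTo rOf (Ico t₀ t₁) (Ico r₀ r₁) := by
    have hk : ((n - 2 : ℕ) : ℝ) = n - 2 := by rw [Nat.cast_sub (by omega), Nat.cast_ofNat]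
    rw [hρ, ht₀, ht₁, ← hk]
    exact mapsTo_rpow_inv_mul_Ico (by omega) ha hr₀.le (hr₀.trans hr₀₁).le
  have hρpos : ∀ t ∈ Ico t₀ t₁, 0 < rOf t := fun t ht => hr₀.trans_le (hmaps ht).1
  have hat : ∀ t ∈ Ico t₀ t₁, 0 < a * t := fun t ht =>
    mul_pos ha ((div_pos (pow_pos hr₀ _) ha).trans_le (ht₀ ▸ ht.1))
  have hρsmooth : ContDiffOn ℝ (⊤ : ℕ∞) rOf (Ico t₀ t₁) := fun t ht => by
    rw [hρ]
    exact ((Real.contDiffAt_rpow_const_of_ne (hat t ht).ne').comp t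
      (contDiff_const.mul contDiff_id).contDiffAt).contDiffWithinAt
  have hρderiv : ∀ t ∈ Ico t₀ t₁, HasDerivAt rOf ((n - 1) * rOf t ^ (3 - (n : ℝ))) t :=
    fun t ht => by
      rw [hρ, show (3 : ℝ) - n = 1 - (n - 2) by ring]
      exact hasDerivAt_mul_rpow_inv (sub_ne_zero.2 hN.ne') (hat t ht)
  have hslice : ∀ p, DifferentiableOn ℝ (u p) (Ico r₀ r₁) := fun p =>
    (husmooth.comp (contDiff_const.prodMk contDiff_id).contDiffOn
      fun _ hs => ⟨mem_univ _, hs⟩).differentiableOn (by simp)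
  refine ⟨contDiffOn_rescale husmooth hρsmooth hmaps hρpos, fun t ht p z => ?_,
    fun p t ht => ?_, fun p t ht => ?_⟩
  · exact congrArg (rOf t ^ _ * ·) (huper _ (hmaps ht) p z)
  · exact mul_pos (Real.rpow_pos_of_pos (hρpos t ht) _) (hupos p _ (hmaps ht))
  · have hu := (hslice p _ (hmaps ht)).hasDerivWithinAt
    rw [(hasDerivWithinAt_rescale (hρderiv t ht) hu hmaps (hρpos t ht).ne').derivWithin
      (uniqueDiffOn_Ico t₀ t₁ t ht), flatLap_rescale]
    exact rescaled_equation (hρpos t ht) (hpde p _ (hmaps ht))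

theorem stmt_3 (n : ℕ) (hn : 3 ≤ n) (r₀ r₁ : ℝ) (hr₀ : 0 < r₀) (hr₀₁ : r₀ < r₁)
    (f u : (Fin (n - 1) → ℝ) → ℝ → ℝ)
    (hfsmooth : ContDiffOn ℝ (⊤ : ℕ∞) (fun q : (Fin (n - 1) → ℝ) × ℝ => f q.1 q.2)
      (Set.univ ×ˢ Set.Ico r₀ r₁))
    (hfper : ∀ r ∈ Set.Ico r₀ r₁, ZPer (fun p => f p r))
    (husmooth : ContDiffOn ℝ (⊤ : ℕ∞) (fun q : (Fin (n - 1) → ℝ) × ℝ => u q.1 q.2)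
      (Set.univ ×ˢ Set.Ico r₀ r₁))
    (huper : ∀ r ∈ Set.Ico r₀ r₁, ZPer (fun p => u p r))
    (hupos : ∀ p, ∀ r ∈ Set.Ico r₀ r₁, 0 < u p r)
    (hpde : ∀ p, ∀ r ∈ Set.Ico r₀ r₁,
      ((n : ℝ) - 1) * r * derivWithin (fun s => u p s) (Set.Ico r₀ r₁) r =
        (u p r) ^ 2 * flatLap (fun q => u q r) p
          + ((n : ℝ) - 1) * ((n : ℝ) - 2) / 2 * u p r + f p r * (u p r) ^ 3)
    (rOf : ℝ → ℝ)
    (hrOf : ∀ t : ℝ, rOf t = (((n : ℝ) - 1) * ((n : ℝ) - 2) * t) ^ ((1 : ℝ) / ((n : ℝ) - 2)))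
    (t₀ t₁ : ℝ)
    (ht₀ : t₀ = r₀ ^ (n - 2) / (((n : ℝ) - 1) * ((n : ℝ) - 2)))
    (ht₁ : t₁ = r₁ ^ (n - 2) / (((n : ℝ) - 1) * ((n : ℝ) - 2)))
    (ut ft : (Fin (n - 1) → ℝ) → ℝ → ℝ)
    (hut : ∀ p t, ut p t = (rOf t) ^ ((1 : ℝ) - (n : ℝ) / 2) * u p (rOf t))
    (hft : ∀ p t, ft p t = f p (rOf t)) :
    ContDiffOn ℝ (⊤ : ℕ∞) (fun q : (Fin (n - 1) → ℝ) × ℝ => ut q.1 q.2)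
      (Set.univ ×ˢ Set.Ico t₀ t₁) ∧
    (∀ t ∈ Set.Ico t₀ t₁, ZPer (fun p => ut p t)) ∧
    (∀ p, ∀ t ∈ Set.Ico t₀ t₁, 0 < ut p t) ∧
    (∀ p, ∀ t ∈ Set.Ico t₀ t₁,
      derivWithin (fun s => ut p s) (Set.Ico t₀ t₁) t =
        (ut p t) ^ 2 * flatLap (fun q => ut q t) p + ft p t * (ut p t) ^ 3) :=
  stmt_3_general n hn r₀ r₁ hr₀ hr₀₁ f u husmooth huper hupos hpde rOf hrOf t₀ t₁ ht₀ ht₁ ut ft hut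
    hft
end

section
/- Let m ≥ 1, τ₀ ∈ ℝ, and let f be a smooth function on 𝕋^m × [τ₀, ∞) with ∂f/∂τ ≥ 0. Let v be a smooth positive solution on 𝕋^m × [τ₀, ∞) of ∂v/∂τ = v²Δv + f v³ − v/2, and define J(τ) = ∫_{𝕋^m} ( |∇v(·, τ)|² − f(·, τ) v(·, τ)² + log v(·, τ) ) dV. Then J is differentiable on [τ₀, ∞) and J′(τ) ≤ −2 ∫_{𝕋^m} v(·, τ)^{−2} |∂v/∂τ(·, τ)|² dV ≤ 0 for every τ; in particular J is non-increasing. -/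
open MeasureTheory Filter Set

open scoped Topology ENNReal

/-! Differentiating under the integral sign (legitimate because the `τ`-derivative of the
integrand is jointly continuous and the closed cube is compact), the gradient term contributes
`2 ∫ ∇v · ∇v_τ`, which integration by parts on the torus turns into `-2 ∫ Δv v_τ`. The equation
says exactly that `v⁻² v_τ = Δv + f v - 1 / (2 v)`, so `J' = -2 ∫ v⁻² v_τ² - ∫ f_τ v²`, and the
last term is nonnegative since `f_τ ≥ 0`. -/

theorem IsCompact.eventually_forall_dist_le {X T F : Type*} [TopologicalSpace X]
    [TopologicalSpace T] [PseudoMetricSpace F] {K : Set X} (hK : IsCompact K) {I : Set T}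
    {H : X → T → F} (hH : ContinuousOn (fun z : X × T => H z.1 z.2) (K ×ˢ I))
    {τ : T} (hτ : τ ∈ I) {ε : ℝ} (hε : 0 < ε) :
    ∀ᶠ u in 𝓝 τ, u ∈ I → ∀ x ∈ K, dist (H x u) (H x τ) ≤ ε := by
  refine (hK.eventually_forall_of_forall_eventually
    (P := fun u x => x ∈ K → u ∈ I → dist (H x u) (H x τ) ≤ ε) fun y hy => ?_).mono
    fun u hu hI x hx => hu x hx hx hI
  have hH' : ContinuousOn (fun z : T × X => H z.2 z.1) (I ×ˢ K) :=
    hH.comp continuous_swap.continuousOn fun z hz => ⟨hz.2, hz.1⟩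
  have hnear : ∀ᶠ z : T × X in 𝓝 (τ, y), z ∈ I ×ˢ K → dist (H z.2 z.1) (H y τ) < ε / 2 :=
    eventually_nhdsWithin_iff.1 <| (hH' (τ, y) ⟨hτ, hy⟩).eventually <|
      Metric.ball_mem_nhds _ (half_pos hε)
  have hnear' : ∀ᶠ z : T × X in 𝓝 (τ, y), (τ, z.2) ∈ I ×ˢ K → dist (H z.2 τ) (H y τ) < ε / 2 :=
    ((continuous_const.prodMk continuous_snd).tendsto (τ, y)).eventually hnear
  filter_upwards [hnear, hnear'] with z h h' hzK hzI
  linarith [dist_triangle_right (H z.2 z.1) (H z.2 τ) (H y τ), h ⟨hzI, hzK⟩, h' ⟨hτ, hzK⟩]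

theorem hasDerivWithinAt_setIntegral_of_continuousOn {X F : Type*} [TopologicalSpace X]
    [MeasurableSpace X] [NormedAddCommGroup F] [NormedSpace ℝ F] {μ : Measure X} {A K : Set X}
    (hK : IsCompact K) (hAK : A ⊆ K) (hA : μ A < ∞) {I : Set ℝ} [I.OrdConnected] {G H : X → ℝ → F}
    (hG : ∀ x ∈ A, ∀ u ∈ I, HasDerivWithinAt (G x) (H x u) I u)
    (hGi : ∀ s ∈ I, IntegrableOn (fun x => G x s) A μ)
    (hH : ContinuousOn (fun z : X × ℝ => H z.1 z.2) (K ×ˢ I))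
    {τ : ℝ} (hτ : τ ∈ I) (hHi : IntegrableOn (fun x => H x τ) A μ) :
    HasDerivWithinAt (fun s => ∫ x in A, G x s ∂μ) (∫ x in A, H x τ ∂μ) I τ := by
  rw [hasDerivWithinAt_iff_isLittleO, Asymptotics.isLittleO_iff]
  intro c hc
  set ε := c / (μ.real A + 1)
  have hε : 0 < ε := div_pos hc (by positivity)
  obtain ⟨δ, hδ, hball⟩ :=
    Metric.eventually_nhds_iff_ball.1 (hK.eventually_forall_dist_le hH hτ hε)
  filter_upwards [self_mem_nhdsWithin, nhdsWithin_le_nhds (Metric.ball_mem_nhds τ hδ)]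
    with s hs hsδ
  have hpt : ∀ x ∈ A, ‖G x s - G x τ - (s - τ) • H x τ‖ ≤ ε * ‖s - τ‖ := by
    intro x hx
    have hconv : Convex ℝ (I ∩ Metric.ball τ δ) :=
      (Set.OrdConnected.convex inferInstance).inter (convex_ball τ δ)
    have hmv := hconv.norm_image_sub_le_of_norm_hasDerivWithin_le
      (f := fun u => G x u - u • H x τ) (f' := fun u => H x u - H x τ)
      (fun u hu => (((hG x hx u hu.1).mono inter_subset_left).sub
        ((hasDerivAt_id u).smul_const (H x τ)).hasDerivWithinAt).congr_deriv (by simp))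
      (fun u hu => (dist_eq_norm _ _).symm.trans_le (hball u hu.2 hu.1 x (hAK hx)))
      ⟨hτ, Metric.mem_ball_self hδ⟩ ⟨hs, hsδ⟩
    calc ‖G x s - G x τ - (s - τ) • H x τ‖ = ‖(G x s - s • H x τ) - (G x τ - τ • H x τ)‖ := by
          congr 1; module
      _ ≤ ε * ‖s - τ‖ := hmv
  have hsplit : (∫ x in A, G x s ∂μ) - (∫ x in A, G x τ ∂μ) - (s - τ) • ∫ x in A, H x τ ∂μ =
      ∫ x in A, (G x s - G x τ - (s - τ) • H x τ) ∂μ := by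
    have hdiff : IntegrableOn (fun x => G x s - G x τ) A μ := (hGi s hs).sub (hGi τ hτ)
    have hlin : IntegrableOn (fun x => (s - τ) • H x τ) A μ := hHi.smul (s - τ)
    rw [integral_sub hdiff hlin, integral_sub (hGi s hs) (hGi τ hτ), integral_smul]
  rw [hsplit]
  calc ‖∫ x in A, (G x s - G x τ - (s - τ) • H x τ) ∂μ‖ ≤ ε * ‖s - τ‖ * μ.real A :=
        norm_setIntegral_le_of_norm_le_const hA hpt
    _ ≤ c * ‖s - τ‖ := by
        rw [mul_right_comm]
        refine mul_le_mul_of_nonneg_right ?_ (norm_nonneg _)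
        rw [div_mul_eq_mul_div, div_le_iff₀ (by positivity)]
        nlinarith [measureReal_nonneg (μ := μ) (s := A)]

theorem cube_subset_Icc {m : ℕ} : cube m ⊆ Icc (0 : Fin m → ℝ) 1 := by
  rw [← pi_univ_Icc]
  exact pi_mono fun _ _ => Ico_subset_Icc_self

theorem measurableSet_cube {m : ℕ} : MeasurableSet (cube m) :=
  MeasurableSet.univ_pi fun _ => measurableSet_Ico

theorem volume_cube {m : ℕ} : volume (cube m) = 1 := by
  simp [cube, volume_pi_pi, Real.volume_Ico]

theorem cube_ae_eq_Icc {m : ℕ} : cube m =ᵐ[volume] Icc (0 : Fin m → ℝ) 1 := by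
  rw [volume_pi]
  exact Measure.univ_pi_Ico_ae_eq_Icc

theorem Continuous.integrableOn_cube {m : ℕ} {g : (Fin m → ℝ) → ℝ} (hg : Continuous g) :
    IntegrableOn g (cube m) :=
  (hg.continuousOn.integrableOn_compact isCompact_Icc).mono_set cube_subset_Icc

theorem ContinuousOn.continuous_slice {X T Y : Type*} [TopologicalSpace X] [TopologicalSpace T]
    [TopologicalSpace Y] {W : X × T → Y} {I : Set T} (hW : ContinuousOn W (univ ×ˢ I)) {u : T}
    (hu : u ∈ I) : Continuous fun x => W (x, u) :=
  continuousOn_univ.1 <| hW.comp (by fun_prop) fun x _ => ⟨mem_univ x, hu⟩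

theorem hasDerivWithinAt_integral_cube {m : ℕ} {a τ : ℝ} {g g' : (Fin m → ℝ) → ℝ → ℝ}
    (hg : ∀ q, ∀ u ∈ Ici a, HasDerivWithinAt (g q) (g' q u) (Ici a) u)
    (hgc : ∀ u ∈ Ici a, Continuous fun q => g q u)
    (hg'c : ContinuousOn (fun z : (Fin m → ℝ) × ℝ => g' z.1 z.2) (univ ×ˢ Ici a))
    (hτ : τ ∈ Ici a) :
    HasDerivWithinAt (fun s => ∫ q in cube m, g q s) (∫ q in cube m, g' q τ) (Ici a) τ :=
  hasDerivWithinAt_setIntegral_of_continuousOn isCompact_Icc cube_subset_Icc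
    (by simp [volume_cube]) (fun q _ => hg q) (fun s hs => (hgc s hs).integrableOn_cube)
    (hg'c.mono (prod_mono (subset_univ _) subset_rfl)) hτ
    (hg'c.continuous_slice hτ).integrableOn_cube

theorem HasFDerivAt.pd_eq {m : ℕ} {φ : (Fin m → ℝ) → ℝ} {φ' : (Fin m → ℝ) →L[ℝ] ℝ}
    {q : Fin m → ℝ} (h : HasFDerivAt φ φ' q) (i : Fin m) : pd i φ q = φ' (Pi.single i 1) := by
  rw [← Function.update_eq_self i q] at h
  exact (h.comp_hasDerivAt (q i) (hasDerivAt_update q i (q i))).deriv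

theorem ContDiff.contDiff_pd {m : ℕ} {n k : WithTop ℕ∞} {φ : (Fin m → ℝ) → ℝ} (hφ : ContDiff ℝ n φ)
    (hn : k + 1 ≤ n) (i : Fin m) : ContDiff ℝ k (pd i φ) := by
  have hn0 : n ≠ 0 := (lt_of_lt_of_le (by positivity) hn).ne'
  have hpd : pd i φ = fun q => fderiv ℝ φ q (Pi.single i 1) :=
    funext fun q => (hφ.differentiable hn0 q).hasFDerivAt.pd_eq i
  rw [hpd]
  exact (hφ.fderiv_right hn).clm_apply contDiff_const

theorem ZPer.pd {m : ℕ} {φ : (Fin m → ℝ) → ℝ} (h : ZPer φ) (i : Fin m) : ZPer (pd i φ) := by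
  intro p z
  have hshift : (fun x => φ (Function.update (fun j => p j + (z j : ℝ)) i x)) =
      fun x => φ (Function.update p i (x - z i)) := by
    funext x
    rw [← h (Function.update p i (x - z i)) z]
    congr 1
    funext j
    rcases eq_or_ne j i with rfl | hj
    · simp
    · simp [Function.update_of_ne hj]
  change deriv _ (p i + z i) = deriv _ (p i)
  rw [hshift, deriv_comp_sub_const (f := fun y => φ (Function.update p i y)),
    add_sub_cancel_right]

theorem integral_cube_pd_eq_zero {m : ℕ} {g : (Fin m → ℝ) → ℝ} (hg : ContDiff ℝ 1 g)
    (hper : ZPer g) (i : Fin m) : ∫ q in cube m, pd i g q = 0 := by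
  -- Divergence theorem for the field `g eᵢ` on `[0, 1]^m`: its flux through the faces
  -- `xᵢ = 0` and `xᵢ = 1` cancel by periodicity, and it has no flux through the others.
  obtain ⟨n, rfl⟩ : ∃ n, m = n + 1 := ⟨m - 1, by have := i.pos; omega⟩
  have hd : ∀ x, HasFDerivAt g (fderiv ℝ g x) x :=
    fun x => (hg.differentiable one_ne_zero x).hasFDerivAt
  have hc : Continuous fun x => fderiv ℝ g x (Pi.single i 1) :=
    (hg.continuous_fderiv one_ne_zero).clm_apply continuous_const
  have hface : ∀ y : Fin n → ℝ, g (i.insertNth 1 y) = g (i.insertNth 0 y) := by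
    intro y
    rw [← hper (i.insertNth 0 y) (Pi.single i 1)]
    congr 1
    funext k
    exact i.succAboveCases (by simp) (fun l => by simp) k
  have hsum : ∀ x, ∑ j, (if j = i then fderiv ℝ g x else 0) (Pi.single j 1) =
      fderiv ℝ g x (Pi.single i 1) :=
    fun x => (Fintype.sum_eq_single i fun j hj => by simp [hj]).trans (by simp)
  have key := integral_divergence_of_hasFDerivAt_off_countable' (a := 0) (b := 1) zero_le_one
    (fun j => if j = i then g else 0) (fun j x => if j = i then fderiv ℝ g x else 0)
    ∅ countable_empty
    (fun j => by split_ifs; exacts [hg.continuous.continuousOn, continuousOn_const])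
    (fun x _ j => by split_ifs; exacts [hd x, hasFDerivAt_const 0 x])
    (by simpa only [hsum] using hc.continuousOn.integrableOn_compact isCompact_Icc)
  rw [Fintype.sum_eq_single i fun j hj => by simp [hj]] at key
  rw [setIntegral_congr_set cube_ae_eq_Icc, funext fun x => (hd x).pd_eq i]
  simpa [hsum, hface] using key

theorem ContDiff.continuous_pd {m : ℕ} {φ : (Fin m → ℝ) → ℝ} (hφ : ContDiff ℝ 1 φ) (i : Fin m) :
    Continuous (pd i φ) :=
  (hφ.contDiff_pd (k := 0) (by simp) i).continuous

theorem integral_cube_pd_mul {m : ℕ} {φ ψ : (Fin m → ℝ) → ℝ} (hφ : ContDiff ℝ 1 φ)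
    (hψ : ContDiff ℝ 1 ψ) (hφp : ZPer φ) (hψp : ZPer ψ) (i : Fin m) :
    ∫ q in cube m, pd i φ q * ψ q = -∫ q in cube m, φ q * pd i ψ q := by
  have hprod : pd i (fun q => φ q * ψ q) = fun q => pd i φ q * ψ q + φ q * pd i ψ q := by
    funext q
    have hφq := (hφ.differentiable one_ne_zero q).hasFDerivAt
    have hψq := (hψ.differentiable one_ne_zero q).hasFDerivAt
    rw [(hφq.fun_mul hψq).pd_eq, hφq.pd_eq, hψq.pd_eq]
    simp only [add_apply, smul_apply, smul_eq_mul]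
    ring
  have hzero := integral_cube_pd_eq_zero (hφ.mul hψ)
    (fun p z => by simp only [hφp p z, hψp p z]) i
  rw [hprod, integral_add (f := fun q => pd i φ q * ψ q) (g := fun q => φ q * pd i ψ q)
    ((hφ.continuous_pd i).mul hψ.continuous).integrableOn_cube
    (hφ.continuous.mul (hψ.continuous_pd i)).integrableOn_cube] at hzero
  exact eq_neg_of_add_eq_zero_left hzero

theorem integral_cube_sum_pd_mul_pd {m : ℕ} {φ ψ : (Fin m → ℝ) → ℝ} (hφ : ContDiff ℝ 2 φ)
    (hψ : ContDiff ℝ 1 ψ) (hφp : ZPer φ) (hψp : ZPer ψ) :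
    ∫ q in cube m, ∑ i, pd i φ q * pd i ψ q = -∫ q in cube m, flatLap φ q * ψ q := by
  have hφ' : ∀ i, ContDiff ℝ 1 (pd i φ) := fun i => hφ.contDiff_pd (by norm_num) i
  simp only [flatLap, Finset.sum_mul]
  rw [integral_finsetSum (f := fun i q => pd i φ q * pd i ψ q) _ fun i _ =>
      ((hφ' i).continuous.mul (hψ.continuous_pd i)).integrableOn_cube,
    integral_finsetSum (f := fun i q => pd i (pd i φ) q * ψ q) _ fun i _ =>
      (((hφ' i).continuous_pd i).mul hψ.continuous).integrableOn_cube,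
    ← Finset.sum_neg_distrib]
  refine Finset.sum_congr rfl fun i _ => ?_
  rw [integral_cube_pd_mul (hφ' i) hψ (hφp.pd i) hψp i, neg_neg]

theorem ContDiff.continuous_gradSq {m : ℕ} {φ : (Fin m → ℝ) → ℝ} (hφ : ContDiff ℝ 1 φ) :
    Continuous (gradSq φ) :=
  continuous_finsetSum _ fun i _ => (hφ.continuous_pd i).pow 2

theorem ContDiff.continuous_flatLap {m : ℕ} {φ : (Fin m → ℝ) → ℝ} (hφ : ContDiff ℝ 2 φ) :
    Continuous (flatLap φ) :=
  continuous_finsetSum _ fun i _ => (hφ.contDiff_pd (by norm_num) i).continuous_pd i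

theorem closure_interior_univ_prod_Ici {E : Type*} [TopologicalSpace E] {a : ℝ} :
    closure (interior ((univ : Set E) ×ˢ Ici a)) = univ ×ˢ Ici a := by
  rw [interior_prod_eq, interior_univ, interior_Ici, closure_prod_eq, closure_univ, closure_Ioi]

section SpaceTime

variable {E : Type*} [NormedAddCommGroup E] [NormedSpace ℝ E] {a u : ℝ}

theorem uniqueDiffOn_univ_prod_Ici : UniqueDiffOn ℝ ((univ : Set E) ×ˢ Ici a) :=
  uniqueDiffOn_univ.prod (uniqueDiffOn_Ici a)

theorem DifferentiableWithinAt.hasDerivWithinAt_timeSlice {F : Type*} [NormedAddCommGroup F]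
    [NormedSpace ℝ F] {W : E × ℝ → F} {p : E}
    (hW : DifferentiableWithinAt ℝ W (univ ×ˢ Ici a) (p, u)) :
    HasDerivWithinAt (fun s => W (p, s)) (fderivWithin ℝ W (univ ×ˢ Ici a) (p, u) (0, 1))
      (Ici a) u :=
  hW.hasFDerivWithinAt.comp_hasDerivWithinAt u
    ((hasDerivAt_const u p).prodMk (hasDerivAt_id u)).hasDerivWithinAt
    fun _ hs => ⟨mem_univ p, hs⟩

theorem DifferentiableWithinAt.hasFDerivAt_spaceSlice {F : Type*} [NormedAddCommGroup F]
    [NormedSpace ℝ F] {W : E × ℝ → F} {p : E}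
    (hW : DifferentiableWithinAt ℝ W (univ ×ˢ Ici a) (p, u)) (hu : u ∈ Ici a) :
    HasFDerivAt (fun x => W (x, u))
      ((fderivWithin ℝ W (univ ×ˢ Ici a) (p, u)).comp (.inl ℝ E ℝ)) p := by
  have h := hW.hasFDerivWithinAt.comp p ((hasFDerivAt_prodMk_left (𝕜 := ℝ) p u).hasFDerivWithinAt
    (s := univ)) fun x _ => (⟨mem_univ x, hu⟩ : (x, u) ∈ (univ : Set E) ×ˢ Ici a)
  rwa [hasFDerivWithinAt_univ] at h

variable {w : E → ℝ → ℝ}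

theorem derivWithin_timeSlice_eq
    (hw : DifferentiableOn ℝ (fun z : E × ℝ => w z.1 z.2) (univ ×ˢ Ici a)) (hu : u ∈ Ici a)
    (p : E) :
    derivWithin (w p) (Ici a) u =
      fderivWithin ℝ (fun z : E × ℝ => w z.1 z.2) (univ ×ˢ Ici a) (p, u) (0, 1) :=
  (hw _ ⟨mem_univ p, hu⟩).hasDerivWithinAt_timeSlice.derivWithin (uniqueDiffOn_Ici a u hu)

theorem DifferentiableOn.hasDerivWithinAt_timeSlice
    (hw : DifferentiableOn ℝ (fun z : E × ℝ => w z.1 z.2) (univ ×ˢ Ici a)) (hu : u ∈ Ici a)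
    (p : E) : HasDerivWithinAt (w p) (derivWithin (w p) (Ici a) u) (Ici a) u :=
  (hw _ ⟨mem_univ p, hu⟩).hasDerivWithinAt_timeSlice.differentiableWithinAt.hasDerivWithinAt

theorem ContDiffOn.derivWithin_timeSlice {n k : WithTop ℕ∞}
    (hw : ContDiffOn ℝ n (fun z : E × ℝ => w z.1 z.2) (univ ×ˢ Ici a)) (hn : k + 1 ≤ n) :
    ContDiffOn ℝ k (fun z : E × ℝ => derivWithin (w z.1) (Ici a) z.2) (univ ×ˢ Ici a) := by
  have hd := hw.differentiableOn (lt_of_lt_of_le (by positivity) hn).ne'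
  refine ((hw.fderivWithin uniqueDiffOn_univ_prod_Ici hn).clm_apply
    (contDiffOn_const (c := ((0 : E), (1 : ℝ))))).congr
    fun z hz => ?_
  exact derivWithin_timeSlice_eq hd hz.2 z.1

theorem ContDiffOn.contDiff_slice {F : Type*} [NormedAddCommGroup F] [NormedSpace ℝ F]
    {n : WithTop ℕ∞} {W : E × ℝ → F} (hW : ContDiffOn ℝ n W (univ ×ˢ Ici a))
    (hu : u ∈ Ici a) : ContDiff ℝ n fun x => W (x, u) :=
  contDiffOn_univ.1 <| hW.comp (by fun_prop) fun x _ => ⟨mem_univ x, hu⟩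

end SpaceTime

section SpaceTimePartials

variable {m : ℕ} {a u : ℝ} {w : (Fin m → ℝ) → ℝ → ℝ}

theorem pd_slice_eq
    (hw : DifferentiableOn ℝ (fun z : (Fin m → ℝ) × ℝ => w z.1 z.2) (univ ×ˢ Ici a))
    (hu : u ∈ Ici a) (i : Fin m) (q : Fin m → ℝ) :
    pd i (fun p => w p u) q =
      fderivWithin ℝ (fun z : (Fin m → ℝ) × ℝ => w z.1 z.2) (univ ×ˢ Ici a) (q, u)
        (Pi.single i 1, 0) :=
  ((hw _ ⟨mem_univ q, hu⟩).hasFDerivAt_spaceSlice hu).pd_eq i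

theorem ContDiffOn.pd_slice {n k : WithTop ℕ∞}
    (hw : ContDiffOn ℝ n (fun z : (Fin m → ℝ) × ℝ => w z.1 z.2) (univ ×ˢ Ici a))
    (hn : k + 1 ≤ n) (i : Fin m) :
    ContDiffOn ℝ k (fun z : (Fin m → ℝ) × ℝ => pd i (fun p => w p z.2) z.1) (univ ×ˢ Ici a) := by
  have hd := hw.differentiableOn (lt_of_lt_of_le (by positivity) hn).ne'
  refine ((hw.fderivWithin uniqueDiffOn_univ_prod_Ici hn).clm_apply
    (contDiffOn_const (c := ((Pi.single i 1 : Fin m → ℝ), (0 : ℝ))))).congr fun z hz => ?_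
  exact pd_slice_eq hd hz.2 i z.1

theorem derivWithin_pd_slice
    (hw : ContDiffOn ℝ 2 (fun z : (Fin m → ℝ) × ℝ => w z.1 z.2) (univ ×ˢ Ici a))
    (hu : u ∈ Ici a) (i : Fin m) (q : Fin m → ℝ) :
    derivWithin (fun s => pd i (fun p => w p s) q) (Ici a) u =
      pd i (fun p => derivWithin (w p) (Ici a) u) q := by
  set S := (univ : Set (Fin m → ℝ)) ×ˢ Ici a
  set D := fderivWithin ℝ (fun z : (Fin m → ℝ) × ℝ => w z.1 z.2) S
  have hqu : (q, u) ∈ S := ⟨mem_univ q, hu⟩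
  have hd := hw.differentiableOn two_ne_zero
  have hD : DifferentiableOn ℝ D S :=
    (hw.fderivWithin uniqueDiffOn_univ_prod_Ici (by norm_num)).differentiableOn one_ne_zero
  have hlhs : derivWithin (fun s => pd i (fun p => w p s) q) (Ici a) u =
      fderivWithin ℝ D S (q, u) (0, 1) (Pi.single i 1, 0) := by
    rw [derivWithin_congr (fun s hs => pd_slice_eq hd hs i q) (pd_slice_eq hd hu i q)]
    simpa using ((hD _ hqu).hasDerivWithinAt_timeSlice.clm_apply
      (hasDerivWithinAt_const u (Ici a) ((Pi.single i 1 : Fin m → ℝ), (0 : ℝ)))).derivWithin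
      (uniqueDiffOn_Ici a u hu)
  have hrhs : pd i (fun p => derivWithin (w p) (Ici a) u) q =
      fderivWithin ℝ D S (q, u) (Pi.single i 1, 0) (0, 1) := by
    rw [funext fun p => derivWithin_timeSlice_eq hd hu p]
    exact ((ContinuousLinearMap.apply ℝ ℝ ((0 : Fin m → ℝ), (1 : ℝ))).hasFDerivAt.comp q
      ((hD _ hqu).hasFDerivAt_spaceSlice hu)).pd_eq i
  rw [hlhs, hrhs]
  exact ((hw _ hqu).isSymmSndFDerivWithinAt (by simp) uniqueDiffOn_univ_prod_Ici
    (by rwa [closure_interior_univ_prod_Ici]) hqu) _ _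

end SpaceTimePartials

theorem hasDerivWithinAt_integral_gradSq {m : ℕ} {a τ : ℝ} {w : (Fin m → ℝ) → ℝ → ℝ}
    (hw : ContDiffOn ℝ 2 (fun z : (Fin m → ℝ) × ℝ => w z.1 z.2) (univ ×ˢ Ici a))
    (hper : ∀ s ∈ Ici a, ZPer fun p => w p s) (hτ : τ ∈ Ici a) :
    HasDerivWithinAt (fun s => ∫ q in cube m, gradSq (fun p => w p s) q)
      (-2 * ∫ q in cube m, flatLap (fun p => w p τ) q * derivWithin (w q) (Ici a) τ)
      (Ici a) τ := by
  set wt : (Fin m → ℝ) → ℝ → ℝ := fun p s => derivWithin (w p) (Ici a) s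
  have hwt : ContDiffOn ℝ 1 (fun z : (Fin m → ℝ) × ℝ => wt z.1 z.2) (univ ×ˢ Ici a) :=
    hw.derivWithin_timeSlice (by norm_num)
  have hP : ∀ i, ContDiffOn ℝ 1 (fun z : (Fin m → ℝ) × ℝ => pd i (fun p => w p z.2) z.1)
      (univ ×ˢ Ici a) := fun i => hw.pd_slice (by norm_num) i
  have hPt : ∀ i, ContinuousOn (fun z : (Fin m → ℝ) × ℝ => pd i (fun p => wt p z.2) z.1)
      (univ ×ˢ Ici a) := fun i => (hwt.pd_slice (k := 0) (by simp) i).continuousOn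
  have hPd : ∀ i q, ∀ u ∈ Ici a, HasDerivWithinAt (fun s => pd i (fun p => w p s) q)
      (pd i (fun p => wt p u) q) (Ici a) u := fun i q u hu => by
    rw [← derivWithin_pd_slice hw hu]
    exact ((hP i).differentiableOn one_ne_zero).hasDerivWithinAt_timeSlice
      (w := fun q s => pd i (fun p => w p s) q) hu q
  have hderiv := hasDerivWithinAt_integral_cube (g := fun q s => gradSq (fun p => w p s) q)
    (g' := fun q u => 2 * ∑ i, pd i (fun p => w p u) q * pd i (fun p => wt p u) q)
    (fun q u hu => by
      refine (HasDerivWithinAt.fun_sum (u := Finset.univ) fun i _ =>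
        (hPd i q u hu).fun_pow 2).congr_deriv ?_
      rw [Finset.mul_sum]
      exact Finset.sum_congr rfl fun i _ => by norm_num [mul_assoc])
    (fun u hu => ((hw.contDiff_slice hu).of_le one_le_two).continuous_gradSq)
    (continuousOn_const.mul (continuousOn_finsetSum _ fun i _ => (hP i).continuousOn.mul (hPt i)))
    hτ
  have hwtper : ZPer fun p => wt p τ := fun p z =>
    derivWithin_congr (fun s hs => hper s hs p z) (hper τ hτ p z)
  convert hderiv using 1
  rw [integral_const_mul, integral_cube_sum_pd_mul_pd (hw.contDiff_slice hτ)
    (hwt.contDiff_slice hτ) (hper τ hτ) hwtper]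
  ring

theorem lyapunov_rate_eq {v vₜ Δv f fₜ : ℝ} (hv : v ≠ 0)
    (hpde : vₜ = v ^ 2 * Δv + f * v ^ 3 - v / 2) :
    -2 * (Δv * vₜ) + (vₜ / v - (fₜ * v ^ 2 + f * (2 * v * vₜ))) =
      -2 * ((v ^ 2)⁻¹ * vₜ ^ 2) - fₜ * v ^ 2 := by
  subst hpde
  field_simp
  ring

section Lyapunov

variable {m : ℕ} {a τ : ℝ} {f v : (Fin m → ℝ) → ℝ → ℝ}

theorem hasDerivWithinAt_integral_log_sub_mul_sq
    (hf : ContDiffOn ℝ 1 (fun z : (Fin m → ℝ) × ℝ => f z.1 z.2) (univ ×ˢ Ici a))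
    (hv : ContDiffOn ℝ 1 (fun z : (Fin m → ℝ) × ℝ => v z.1 z.2) (univ ×ˢ Ici a))
    (hvpos : ∀ p, ∀ s ∈ Ici a, 0 < v p s) (hτ : τ ∈ Ici a) :
    HasDerivWithinAt (fun s => ∫ q in cube m, (Real.log (v q s) - f q s * v q s ^ 2))
      (∫ q in cube m, (derivWithin (v q) (Ici a) τ / v q τ - (derivWithin (f q) (Ici a) τ *
        v q τ ^ 2 + f q τ * (2 * v q τ * derivWithin (v q) (Ici a) τ)))) (Ici a) τ := by
  have hvd := hv.differentiableOn one_ne_zero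
  have hfd := hf.differentiableOn one_ne_zero
  have hvt := (hv.derivWithin_timeSlice (k := 0) (by norm_num)).continuousOn
  have hft := (hf.derivWithin_timeSlice (k := 0) (by norm_num)).continuousOn
  have hvne : ∀ z ∈ (univ : Set (Fin m → ℝ)) ×ˢ Ici a, v z.1 z.2 ≠ 0 :=
    fun z hz => (hvpos z.1 z.2 hz.2).ne'
  refine hasDerivWithinAt_integral_cube (g := fun q s => Real.log (v q s) - f q s * v q s ^ 2)
    (g' := fun q u => derivWithin (v q) (Ici a) u / v q u - (derivWithin (f q) (Ici a) u *
      v q u ^ 2 + f q u * (2 * v q u * derivWithin (v q) (Ici a) u)))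
    (fun q u hu => ?_) (fun u hu => ?_) ?_ hτ
  · exact (((hvd.hasDerivWithinAt_timeSlice hu q).log (hvpos q u hu).ne').sub
      ((hfd.hasDerivWithinAt_timeSlice hu q).fun_mul
        ((hvd.hasDerivWithinAt_timeSlice hu q).fun_pow 2))).congr_deriv (by simp)
  · exact ((hv.continuousOn.log hvne).sub
      (hf.continuousOn.mul (hv.continuousOn.pow 2))).continuous_slice hu
  · exact (hvt.div hv.continuousOn hvne).sub ((hft.mul (hv.continuousOn.pow 2)).add
      (hf.continuousOn.mul ((continuousOn_const.mul hv.continuousOn).mul hvt)))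

theorem integral_cube_lyapunov_rate
    (hf : ContDiffOn ℝ 1 (fun z : (Fin m → ℝ) × ℝ => f z.1 z.2) (univ ×ˢ Ici a))
    (hv : ContDiffOn ℝ 2 (fun z : (Fin m → ℝ) × ℝ => v z.1 z.2) (univ ×ˢ Ici a))
    (hvpos : ∀ p, ∀ s ∈ Ici a, 0 < v p s) (hτ : τ ∈ Ici a)
    (hpde : ∀ p, derivWithin (v p) (Ici a) τ =
      v p τ ^ 2 * flatLap (fun q => v q τ) p + f p τ * v p τ ^ 3 - v p τ / 2) :
    -2 * (∫ q in cube m, flatLap (fun p => v p τ) q * derivWithin (v q) (Ici a) τ) +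
        ∫ q in cube m, (derivWithin (v q) (Ici a) τ / v q τ - (derivWithin (f q) (Ici a) τ *
          v q τ ^ 2 + f q τ * (2 * v q τ * derivWithin (v q) (Ici a) τ))) =
      -2 * (∫ q in cube m, (v q τ ^ 2)⁻¹ * derivWithin (v q) (Ici a) τ ^ 2) -
        ∫ q in cube m, derivWithin (f q) (Ici a) τ * v q τ ^ 2 := by
  have hvτ : Continuous fun q => v q τ := hv.continuousOn.continuous_slice hτ
  have hfτ : Continuous fun q => f q τ := hf.continuousOn.continuous_slice hτ
  have hvt : Continuous fun q => derivWithin (v q) (Ici a) τ :=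
    (hv.derivWithin_timeSlice (k := 0) (by norm_num)).continuousOn.continuous_slice hτ
  have hft : Continuous fun q => derivWithin (f q) (Ici a) τ :=
    (hf.derivWithin_timeSlice (k := 0) (by norm_num)).continuousOn.continuous_slice hτ
  have hvne : ∀ q, v q τ ≠ 0 := fun q => (hvpos q τ hτ).ne'
  have hΔ : Continuous fun q => flatLap (fun p => v p τ) q :=
    (hv.contDiff_slice hτ).continuous_flatLap
  rw [← integral_const_mul, ← integral_const_mul,
    ← integral_add (f := fun q => -2 * (flatLap (fun p => v p τ) q * derivWithin (v q) (Ici a) τ))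
      (g := fun q => derivWithin (v q) (Ici a) τ / v q τ - (derivWithin (f q) (Ici a) τ *
        v q τ ^ 2 + f q τ * (2 * v q τ * derivWithin (v q) (Ici a) τ)))
      (Continuous.integrableOn_cube (by fun_prop))
      (Continuous.integrableOn_cube (by fun_prop (disch := exact hvne))),
    ← integral_sub (f := fun q => -2 * ((v q τ ^ 2)⁻¹ * derivWithin (v q) (Ici a) τ ^ 2))
      (g := fun q => derivWithin (f q) (Ici a) τ * v q τ ^ 2)
      (Continuous.integrableOn_cube
        (by fun_prop (disch := exact fun q => pow_ne_zero 2 (hvne q))))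
      (Continuous.integrableOn_cube (by fun_prop))]
  congr 1 with q
  exact lyapunov_rate_eq (hvne q) (hpde q)

theorem hasDerivWithinAt_lyapunov
    (hf : ContDiffOn ℝ 1 (fun z : (Fin m → ℝ) × ℝ => f z.1 z.2) (univ ×ˢ Ici a))
    (hv : ContDiffOn ℝ 2 (fun z : (Fin m → ℝ) × ℝ => v z.1 z.2) (univ ×ˢ Ici a))
    (hvper : ∀ s ∈ Ici a, ZPer fun p => v p s) (hvpos : ∀ p, ∀ s ∈ Ici a, 0 < v p s)
    (hτ : τ ∈ Ici a)
    (hpde : ∀ p, derivWithin (v p) (Ici a) τ =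
      v p τ ^ 2 * flatLap (fun q => v q τ) p + f p τ * v p τ ^ 3 - v p τ / 2) :
    HasDerivWithinAt
      (fun s => ∫ q in cube m, (gradSq (fun p => v p s) q - f q s * v q s ^ 2 + Real.log (v q s)))
      (-2 * (∫ q in cube m, (v q τ ^ 2)⁻¹ * derivWithin (v q) (Ici a) τ ^ 2) -
        ∫ q in cube m, derivWithin (f q) (Ici a) τ * v q τ ^ 2) (Ici a) τ := by
  have hv0 : ∀ {s}, s ∈ Ici a → Continuous fun q => v q s :=
    fun hs => hv.continuousOn.continuous_slice hs
  have hsplit : ∀ s ∈ Ici a,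
      ∫ q in cube m, (gradSq (fun p => v p s) q - f q s * v q s ^ 2 + Real.log (v q s)) =
        (∫ q in cube m, gradSq (fun p => v p s) q) +
          ∫ q in cube m, (Real.log (v q s) - f q s * v q s ^ 2) := by
    intro s hs
    rw [← integral_add (f := fun q => gradSq (fun p => v p s) q)
      (g := fun q => Real.log (v q s) - f q s * v q s ^ 2)
      ((hv.contDiff_slice hs).of_le one_le_two).continuous_gradSq.integrableOn_cube
      (((hv0 hs).log fun q => (hvpos q s hs).ne').fun_sub
        ((hf.continuousOn.continuous_slice hs).fun_mul ((hv0 hs).fun_pow 2))).integrableOn_cube]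
    congr 1 with q
    ring
  refine ((hasDerivWithinAt_integral_gradSq hv hvper hτ).add
    (hasDerivWithinAt_integral_log_sub_mul_sq hf (hv.of_le one_le_two) hvpos hτ)).congr
    (fun s hs => hsplit s hs) (hsplit τ hτ) |>.congr_deriv
    (integral_cube_lyapunov_rate hf hv hvpos hτ hpde)

end Lyapunov

theorem stmt_14_general (m : ℕ) (τ₀ : ℝ)
    (f v : (Fin m → ℝ) → ℝ → ℝ)
    (hfsmooth : ContDiffOn ℝ (⊤ : ℕ∞) (fun q : (Fin m → ℝ) × ℝ => f q.1 q.2)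
      (Set.univ ×ˢ Set.Ici τ₀))
    (hfmono : ∀ p, ∀ τ ∈ Set.Ici τ₀,
      0 ≤ derivWithin (fun s => f p s) (Set.Ici τ₀) τ)
    (hvsmooth : ContDiffOn ℝ (⊤ : ℕ∞) (fun q : (Fin m → ℝ) × ℝ => v q.1 q.2)
      (Set.univ ×ˢ Set.Ici τ₀))
    (hvper : ∀ τ ∈ Set.Ici τ₀, ZPer (fun p => v p τ))
    (hvpos : ∀ p, ∀ τ ∈ Set.Ici τ₀, 0 < v p τ)
    (hpde : ∀ p, ∀ τ ∈ Set.Ici τ₀,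
      derivWithin (fun s => v p s) (Set.Ici τ₀) τ =
        (v p τ) ^ 2 * flatLap (fun q => v q τ) p + f p τ * (v p τ) ^ 3 - v p τ / 2)
    (J : ℝ → ℝ)
    (hJ : ∀ τ, J τ = ∫ q in cube m,
      (gradSq (fun p => v p τ) q - f q τ * (v q τ) ^ 2 + Real.log (v q τ))) :
    ∀ τ ∈ Set.Ici τ₀,
      DifferentiableWithinAt ℝ J (Set.Ici τ₀) τ ∧
      derivWithin J (Set.Ici τ₀) τ ≤
        -2 * ∫ q in cube m,
          ((v q τ) ^ 2)⁻¹ * (derivWithin (fun s => v q s) (Set.Ici τ₀) τ) ^ 2 ∧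
      (-2 * ∫ q in cube m,
          ((v q τ) ^ 2)⁻¹ * (derivWithin (fun s => v q s) (Set.Ici τ₀) τ) ^ 2) ≤ 0 := by
  intro τ hτ
  obtain rfl : J = _ := funext hJ
  have hderiv := hasDerivWithinAt_lyapunov (hfsmooth.of_le (WithTop.coe_le_coe.2 le_top))
    (hvsmooth.of_le (WithTop.coe_le_coe.2 le_top)) hvper hvpos hτ fun p => hpde p τ hτ
  have hdissip : 0 ≤ ∫ q in cube m, ((v q τ) ^ 2)⁻¹ * derivWithin (v q) (Ici τ₀) τ ^ 2 :=
    setIntegral_nonneg measurableSet_cube fun q _ => by positivity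
  have hforcing : 0 ≤ ∫ q in cube m, derivWithin (f q) (Ici τ₀) τ * v q τ ^ 2 :=
    setIntegral_nonneg measurableSet_cube fun q _ => mul_nonneg (hfmono q τ hτ) (sq_nonneg _)
  refine ⟨hderiv.differentiableWithinAt, ?_, by linarith⟩
  rw [hderiv.derivWithin (uniqueDiffOn_Ici τ₀ τ hτ)]
  linarith

theorem stmt_14 (m : ℕ) (hm : 1 ≤ m) (τ₀ : ℝ)
    (f v : (Fin m → ℝ) → ℝ → ℝ)
    (hfsmooth : ContDiffOn ℝ (⊤ : ℕ∞) (fun q : (Fin m → ℝ) × ℝ => f q.1 q.2)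
      (Set.univ ×ˢ Set.Ici τ₀))
    (hfper : ∀ τ ∈ Set.Ici τ₀, ZPer (fun p => f p τ))
    (hfmono : ∀ p, ∀ τ ∈ Set.Ici τ₀,
      0 ≤ derivWithin (fun s => f p s) (Set.Ici τ₀) τ)
    (hvsmooth : ContDiffOn ℝ (⊤ : ℕ∞) (fun q : (Fin m → ℝ) × ℝ => v q.1 q.2)
      (Set.univ ×ˢ Set.Ici τ₀))
    (hvper : ∀ τ ∈ Set.Ici τ₀, ZPer (fun p => v p τ))
    (hvpos : ∀ p, ∀ τ ∈ Set.Ici τ₀, 0 < v p τ)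
    (hpde : ∀ p, ∀ τ ∈ Set.Ici τ₀,
      derivWithin (fun s => v p s) (Set.Ici τ₀) τ =
        (v p τ) ^ 2 * flatLap (fun q => v q τ) p + f p τ * (v p τ) ^ 3 - v p τ / 2)
    (J : ℝ → ℝ)
    (hJ : ∀ τ, J τ = ∫ q in cube m,
      (gradSq (fun p => v p τ) q - f q τ * (v q τ) ^ 2 + Real.log (v q τ))) :
    ∀ τ ∈ Set.Ici τ₀,
      DifferentiableWithinAt ℝ J (Set.Ici τ₀) τ ∧
      derivWithin J (Set.Ici τ₀) τ ≤
        -2 * ∫ q in cube m,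
          ((v q τ) ^ 2)⁻¹ * (derivWithin (fun s => v q s) (Set.Ici τ₀) τ) ^ 2 ∧
      (-2 * ∫ q in cube m,
          ((v q τ) ^ 2)⁻¹ * (derivWithin (fun s => v q s) (Set.Ici τ₀) τ) ^ 2) ≤ 0 :=
  stmt_14_general m τ₀ f v hfsmooth hfmono hvsmooth hvper hvpos hpde J hJ
end
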